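/- arXiv:2605.21159 — 4 statements merged into one kernel-verified Lean document; each statement's English description precedes it below -/
import Mathlib

section
/- Let ι be a type, s a nonempty finite subset of ι, and n : ι → ℕ a function with n i ≥ 1 for every i ∈ s. Let R be a commutative ring, q ∈ R, and let N be a natural number with n i ≤ N for all i ∈ s. Then ∑_{K ⊆ s, K ≠ ∅} (q − 1)^{|K| − 1} · (gcd_{i ∈ K} n i) = ∑_{d = 1}^{N} φ(d) · ( ∑_{j = 0}^{r_d − 1} q^j ), where the left-hand sum ranges over all nonempty subsets K of s, gcd_{i∈K} n i ∈ ℕ is cast into R, φ is Euler's totient function (cast into R), and r_d = #{ i ∈ s : d divides n i }; the inner sum on the right is empty, hence 0, whenever r_d = 0. -/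
/-!
Expand each `gcd_{i ∈ K} n i` as `∑_{d ∣ gcd} φ d` (Gauss) and swap the two sums. For fixed `d`
the subsets `K` with `d ∣ gcd_{i ∈ K} n i` are exactly the subsets of `{i ∈ s | d ∣ n i}`, and
`∑_{∅ ≠ K ⊆ T} (q - 1)^{|K| - 1} = [|T|]_q` because both sides grow by
`∑_{K ⊆ T} (q - 1)^{|K|} = q^{|T|}` when a point is added to `T`.
-/

open Finset

theorem Finset.sum_powerset_nonempty_sub_one_pow {ι R : Type*} [CommRing R] (q : R)
    (T : Finset ι) :
    ∑ K ∈ T.powerset with K.Nonempty, (q - 1) ^ (#K - 1) = ∑ j ∈ range #T, q ^ j := by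
  classical
  induction T using Finset.induction_on with
  | empty => simp [filter_singleton]
  | insert a T ha ih =>
    have sum_powerset_pow : ∑ K ∈ T.powerset, (q - 1) ^ #K = q ^ #T := by
      simpa using sum_pow_mul_eq_add_pow (q - 1) 1 T
    rw [sum_filter, sum_powerset_insert ha, ← sum_filter, ih, card_insert_of_notMem ha,
      sum_range_succ, ← sum_powerset_pow]
    congr 1
    refine sum_congr rfl fun K hK => ?_
    rw [if_pos (insert_nonempty a K), card_insert_of_notMem fun h => ha (mem_powerset.1 hK h),
      Nat.add_sub_cancel]

theorem Nat.sum_totient_Icc_filter_dvd {m N : ℕ} (hm : m ≠ 0) (hmN : m ≤ N) :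
    ∑ d ∈ Icc 1 N with d ∣ m, d.totient = m := by
  convert Nat.sum_totient m using 2
  ext d
  simp only [mem_filter, mem_Icc, Nat.mem_divisors, and_iff_left hm]
  exact ⟨And.right, fun hd => ⟨⟨Nat.pos_of_dvd_of_pos hd (Nat.pos_of_ne_zero hm),
    (Nat.le_of_dvd (Nat.pos_of_ne_zero hm) hd).trans hmN⟩, hd⟩⟩

theorem Finset.sum_totient_Icc_filter_dvd_gcd {ι : Type*} {K : Finset ι} {n : ι → ℕ} {i : ι}
    {N : ℕ} (hi : i ∈ K) (hni : n i ≠ 0) (hniN : n i ≤ N) :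
    ∑ d ∈ Icc 1 N with d ∣ K.gcd n, d.totient = K.gcd n :=
  Nat.sum_totient_Icc_filter_dvd (mt (gcd_eq_zero_iff.1 · i hi) hni)
    ((Nat.le_of_dvd (Nat.pos_of_ne_zero hni) (gcd_dvd hi)).trans hniN)

theorem Finset.filter_powerset_dvd_gcd {ι : Type*} (s : Finset ι) (n : ι → ℕ) (d : ℕ) :
    {K ∈ s.powerset | d ∣ K.gcd n} = {i ∈ s | d ∣ n i}.powerset := by
  ext K
  simp only [mem_filter, mem_powerset, dvd_gcd_iff, subset_iff]
  exact ⟨fun h _ hi => ⟨h.1 hi, h.2 _ hi⟩, fun h => ⟨fun _ hi => (h hi).1, fun _ hi => (h hi).2⟩⟩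

theorem stmt_3_general {ι : Type*} (s : Finset ι) (n : ι → ℕ)
    (hn : ∀ i ∈ s, 1 ≤ n i) (R : Type*) [CommRing R] (q : R) (N : ℕ)
    (hN : ∀ i ∈ s, n i ≤ N) :
    ∑ K ∈ s.powerset.filter (fun K => K.Nonempty),
        (q - 1) ^ (K.card - 1) * ((K.gcd n : ℕ) : R) =
      ∑ d ∈ Finset.Icc 1 N, ((Nat.totient d : ℕ) : R) *
        ∑ j ∈ Finset.range ((s.filter (fun i => d ∣ n i)).card), q ^ j := by
  calc _ = ∑ K ∈ s.powerset with K.Nonempty, ∑ d ∈ Icc 1 N,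
          if d ∣ K.gcd n then (d.totient : R) * (q - 1) ^ (#K - 1) else 0 := by
        refine sum_congr rfl fun K hK => ?_
        obtain ⟨hKs, i, hi⟩ := mem_filter.1 hK
        have his := mem_powerset.1 hKs hi
        have gcd_eq := congrArg (Nat.cast : ℕ → R)
          (sum_totient_Icc_filter_dvd_gcd hi (Nat.one_le_iff_ne_zero.1 (hn i his)) (hN i his))
        rw [← gcd_eq, Nat.cast_sum, mul_sum, sum_filter]
        simp only [mul_comm]
    _ = ∑ d ∈ Icc 1 N, (d.totient : R) *
          ∑ K ∈ {i ∈ s | d ∣ n i}.powerset with K.Nonempty, (q - 1) ^ (#K - 1) := by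
        rw [sum_comm]
        refine sum_congr rfl fun d _ => ?_
        rw [← sum_filter, ← mul_sum, filter_comm, filter_powerset_dvd_gcd]
    _ = _ := by simp only [sum_powerset_nonempty_sub_one_pow]

/-- Let `ι` be a type, `s` a nonempty finite subset of `ι`, and `n : ι → ℕ`
with `n i ≥ 1` for every `i ∈ s`.  Let `R` be a commutative ring, `q ∈ R`, and `N` a natural
number with `n i ≤ N` for all `i ∈ s`.  Then
`∑_{∅ ≠ K ⊆ s} (q − 1)^{|K| − 1} · gcd_{i ∈ K} n i
  = ∑_{d = 1}^{N} φ(d) · ∑_{j = 0}^{r_d − 1} q^j`,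
where `r_d = #{i ∈ s : d ∣ n i}` and `φ` is Euler's totient function. -/
theorem stmt_3 {ι : Type*} (s : Finset ι) (hs : s.Nonempty) (n : ι → ℕ)
    (hn : ∀ i ∈ s, 1 ≤ n i) (R : Type*) [CommRing R] (q : R) (N : ℕ)
    (hN : ∀ i ∈ s, n i ≤ N) :
    ∑ K ∈ s.powerset.filter (fun K => K.Nonempty),
        (q - 1) ^ (K.card - 1) * ((K.gcd n : ℕ) : R) =
      ∑ d ∈ Finset.Icc 1 N, ((Nat.totient d : ℕ) : R) *
        ∑ j ∈ Finset.range ((s.filter (fun i => d ∣ n i)).card), q ^ j :=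
  stmt_3_general s n hn R q N hN
end

section
/- Let ι be a finite type, n : ι → ℤ, and J ⊆ ι a subset such that n i ≠ 0 for some i ∉ J. Let H be the subgroup of the free abelian group ι → ℤ generated by the standard basis vectors e_j for j ∈ J together with the vector ∑_{i ∈ ι} (n i) · e_i. Then the torsion subgroup of the quotient group (ι → ℤ)/H is finite of cardinality equal to gcd{ |n i| : i ∈ ι, i ∉ J }. -/
/-!
Modulo `H`, a vector is determined by its coordinates off `J`, and `H` consists of the vectors
that agree off `J` with an integer multiple of `n`. Write `n = g • w` off `J` with `g` the gcd
and `w` primitive. If `k • x ≡ c • n` with `k ≠ 0`, then `k` divides `c * g * w i` for all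
`i ∉ J`, hence `k ∣ c * g` by primitivity of `w`, so `x ≡ t • w`. Thus `t ↦ [t • w]` maps `ℤ`
onto the torsion subgroup, with kernel `g ℤ`.
-/

/-- The torsion subgroup of an abelian group: the subgroup of elements killed by some
positive integer. -/
def torsionAddSubgroup (G : Type*) [AddCommGroup G] : AddSubgroup G where
  carrier := {x | ∃ n : ℕ, 0 < n ∧ n • x = 0}
  zero_mem' := ⟨1, Nat.one_pos, by simp⟩
  add_mem' := by
    rintro x y ⟨n, hn, hx⟩ ⟨m, hm, hy⟩
    refine ⟨n * m, Nat.mul_pos hn hm, ?_⟩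
    have h1 : (n * m) • x = 0 := by rw [mul_comm, mul_smul, hx, smul_zero]
    have h2 : (n * m) • y = 0 := by rw [mul_smul, hy, smul_zero]
    rw [smul_add, h1, h2, add_zero]
  neg_mem' := by
    rintro x ⟨n, hn, hx⟩
    exact ⟨n, hn, by rw [smul_neg, hx, neg_zero]⟩

open Finset

theorem Int.natAbs_finset_gcd {β : Type*} (s : Finset β) (f : β → ℤ) :
    (s.gcd f).natAbs = s.gcd fun i => (f i).natAbs := by
  classical
  induction s using Finset.induction_on with
  | empty => simp
  | insert a s _ ih => rw [gcd_insert, gcd_insert, Int.natAbs_gcd, Int.gcd_eq_natAbs, ih]; rfl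

theorem Finset.dvd_of_forall_dvd_mul_of_gcd_eq_one {α β : Type*} [CommMonoidWithZero α]
    [StrongNormalizedGCDMonoid α] {s : Finset β} {w : β → α} (hw : s.gcd w = 1) {k m : α}
    (h : ∀ i ∈ s, k ∣ m * w i) : k ∣ m := by
  have := Finset.dvd_gcd h
  rwa [gcd_mul_left, hw, mul_one, dvd_normalize_iff] at this

theorem mem_closure_single_image_union_singleton_iff {ι : Type*} [DecidableEq ι] (J : Finset ι)
    (v x : ι → ℤ) :
    x ∈ AddSubgroup.closure ((fun j => Pi.single j (1 : ℤ)) '' ↑J ∪ {v}) ↔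
      ∃ c : ℤ, ∀ i ∉ J, x i = c * v i := by
  constructor
  · intro hx
    induction hx using AddSubgroup.closure_induction with
    | mem y hy =>
      rcases hy with ⟨j, hj, rfl⟩ | rfl
      · exact ⟨0, fun i hi => by simp [(ne_of_mem_of_not_mem hj hi).symm]⟩
      · exact ⟨1, fun i _ => (one_mul _).symm⟩
    | zero => exact ⟨0, fun i _ => by simp⟩
    | add a b _ _ ha hb =>
      obtain ⟨c, hc⟩ := ha
      obtain ⟨d, hd⟩ := hb
      exact ⟨c + d, fun i hi => by simp [hc i hi, hd i hi, add_mul]⟩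
    | neg a _ ha =>
      obtain ⟨c, hc⟩ := ha
      exact ⟨-c, fun i hi => by simp [hc i hi]⟩
  · rintro ⟨c, hc⟩
    have hx : x = c • v + ∑ j ∈ J, (x j - c * v j) • Pi.single j (1 : ℤ) := by
      funext k
      by_cases hk : k ∈ J
      · simp [Finset.sum_apply, Pi.single_apply, hk]
      · simp [Finset.sum_apply, Pi.single_apply, hk, hc k hk]
    set K := AddSubgroup.closure ((fun j => Pi.single j (1 : ℤ)) '' ↑J ∪ {v})
    have hv : v ∈ K := AddSubgroup.subset_closure (Set.mem_union_right _ rfl)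
    have he : ∀ j ∈ J, Pi.single j 1 ∈ K := fun j hj =>
      AddSubgroup.subset_closure (Set.mem_union_left _ (Set.mem_image_of_mem _ hj))
    rw [hx]
    exact add_mem (zsmul_mem hv c) (sum_mem fun j hj => zsmul_mem (he j hj) _)

section
variable {ι : Type*} {H : AddSubgroup (ι → ℤ)} {s : Finset ι} {v : ι → ℤ}

theorem zsmul_mem_iff_dvd (hH : ∀ x, x ∈ H ↔ ∃ c : ℤ, ∀ i ∈ s, x i = c * v i)
    {g : ℤ} {w : ι → ℤ} (hvw : ∀ i ∈ s, v i = g * w i) {i₀ : ι} (hi₀ : i₀ ∈ s)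
    (hwi₀ : w i₀ ≠ 0) (t : ℤ) : t • w ∈ H ↔ g ∣ t := by
  rw [hH]
  constructor
  · rintro ⟨c, hc⟩
    have h := hc i₀ hi₀
    rw [Pi.smul_apply, smul_eq_mul, hvw i₀ hi₀, ← mul_assoc] at h
    exact ⟨c, by rw [mul_right_cancel₀ hwi₀ h, mul_comm]⟩
  · rintro ⟨c, rfl⟩
    exact ⟨c, fun i hi => by rw [hvw i hi, Pi.smul_apply, smul_eq_mul]; ring⟩

theorem exists_sub_zsmul_mem_of_zsmul_mem (hH : ∀ x, x ∈ H ↔ ∃ c : ℤ, ∀ i ∈ s, x i = c * v i)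
    {g : ℤ} {w : ι → ℤ} (hvw : ∀ i ∈ s, v i = g * w i) (hw : s.gcd w = 1) {k : ℤ}
    (hk : k ≠ 0) {x : ι → ℤ} (hx : k • x ∈ H) : ∃ t : ℤ, x - t • w ∈ H := by
  obtain ⟨c, hc⟩ := (hH _).mp hx
  have hkx : ∀ i ∈ s, k * x i = c * g * w i := fun i hi => by
    rw [← smul_eq_mul, ← Pi.smul_apply, hc i hi, hvw i hi, mul_assoc]
  obtain ⟨t, ht⟩ : k ∣ c * g :=
    Finset.dvd_of_forall_dvd_mul_of_gcd_eq_one hw fun i hi => ⟨x i, (hkx i hi).symm⟩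
  refine ⟨t, (hH _).mpr ⟨0, fun i hi => ?_⟩⟩
  have : k * x i = k * (t * w i) := by rw [hkx i hi, ht, mul_assoc]
  simp [mul_left_cancel₀ hk this]

theorem card_torsionAddSubgroup_quotient (hH : ∀ x, x ∈ H ↔ ∃ c : ℤ, ∀ i ∈ s, x i = c * v i)
    (hv : ∃ i ∈ s, v i ≠ 0) :
    Nat.card (torsionAddSubgroup ((ι → ℤ) ⧸ H)) = s.gcd fun i => (v i).natAbs := by
  obtain ⟨i₀, hi₀, hvi₀⟩ := hv
  obtain ⟨w, hvw, hw⟩ := Finset.extract_gcd v ⟨i₀, hi₀⟩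
  set g := s.gcd v
  have hwi₀ : w i₀ ≠ 0 := fun h => hvi₀ (by rw [hvw i₀ hi₀, h, mul_zero])
  have hg : g ≠ 0 := fun h => hvi₀ (by rw [hvw i₀ hi₀, h, zero_mul])
  let f : ℤ →+ (ι → ℤ) ⧸ H := (QuotientAddGroup.mk' H).comp (zmultiplesHom _ w)
  have hker : f.ker = AddSubgroup.zmultiples g := by
    ext t
    rw [AddMonoidHom.mem_ker, Int.mem_zmultiples_iff]
    exact (QuotientAddGroup.eq_zero_iff _).trans (zsmul_mem_iff_dvd hH hvw hi₀ hwi₀ t)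
  have hrange : torsionAddSubgroup ((ι → ℤ) ⧸ H) = f.range := by
    ext q
    constructor
    · rintro ⟨k, hk, hkq⟩
      induction q using QuotientAddGroup.induction_on with | H x => ?_
      obtain ⟨t, ht⟩ := exists_sub_zsmul_mem_of_zsmul_mem hH hvw hw
        (Int.natCast_ne_zero.mpr hk.ne') (x := x)
        (by rwa [natCast_zsmul, ← QuotientAddGroup.eq_zero_iff])
      exact ⟨t, (QuotientAddGroup.eq_iff_sub_mem.mpr ht).symm⟩
    · rintro ⟨t, rfl⟩
      refine ⟨g.natAbs, Int.natAbs_pos.mpr hg, ?_⟩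
      rw [← natCast_zsmul, ← map_zsmul, smul_eq_mul, ← f.mem_ker, hker, Int.mem_zmultiples_iff]
      exact dvd_mul_of_dvd_left (Int.dvd_natAbs.mpr dvd_rfl) t
  rw [hrange, ← Nat.card_congr (QuotientAddGroup.quotientKerEquivRange f).toEquiv, hker,
    ← AddSubgroup.index, Int.index_zmultiples, Int.natAbs_finset_gcd]

end

/-- Let `ι` be a finite type, `n : ι → ℤ`, and `J ⊆ ι` a subset such that
`n i ≠ 0` for some `i ∉ J`.  Let `H` be the subgroup of the free abelian group `ι → ℤ`
generated by the standard basis vectors `e_j` for `j ∈ J` together with the vector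
`∑ i, (n i) • e_i`.  Then the torsion subgroup of the quotient group `(ι → ℤ)/H` is finite
of cardinality equal to `gcd {|n i| : i ∉ J}`. -/
theorem stmt_5 {ι : Type*} [Fintype ι] [DecidableEq ι]
    (n : ι → ℤ) (J : Finset ι) (hJ : ∃ i, i ∉ J ∧ n i ≠ 0)
    (H : AddSubgroup (ι → ℤ))
    (hH : H = AddSubgroup.closure
        (((fun j => (Pi.single j (1 : ℤ) : ι → ℤ)) '' ↑J) ∪
          {∑ i, n i • (Pi.single i (1 : ℤ) : ι → ℤ)})) :
    Finite (torsionAddSubgroup ((ι → ℤ) ⧸ H)) ∧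
      Nat.card (torsionAddSubgroup ((ι → ℤ) ⧸ H)) =
        Finset.gcd (Finset.univ.filter (fun i => i ∉ J)) (fun i => (n i).natAbs) := by
  have hsum : ∑ i, n i • (Pi.single i (1 : ℤ) : ι → ℤ) = n := by
    simp_rw [← Pi.single_smul, smul_eq_mul, mul_one, Finset.univ_sum_single]
  have hmem : ∀ x, x ∈ H ↔ ∃ c : ℤ, ∀ i ∈ univ.filter (fun i => i ∉ J), x i = c * n i := by
    intro x
    simpa only [hH, hsum, mem_filter, mem_univ, true_and] using
      mem_closure_single_image_union_singleton_iff J n x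
  have hcard := card_torsionAddSubgroup_quotient hmem (by simpa using hJ)
  refine ⟨Nat.finite_of_card_ne_zero ?_, hcard⟩
  rw [hcard, Ne, Finset.gcd_eq_zero_iff]
  simpa using hJ
end

section
/- Let ι be a type, X an abelian group, and F a function assigning to each finite subset s ⊆ ι a subgroup F(s) of X, such that for all finite subsets s, t: (i) F(s ∪ t) = F(s) + F(t); (ii) F(s ∩ t) = F(s) ∩ F(t); and (iii) for s ⊆ t, the quotient F(t)/F(s) is torsion-free, i.e., every element of F(t) that is torsion modulo F(s) lies in F(s). Fix a finite subset t ⊆ ι and an element x ∈ X that is torsion modulo F(t). Call a subset s ⊆ t admissible for x if there exists y ∈ X, torsion modulo F(s), with x − y ∈ F(t). Then: (a) t itself is admissible, and if s₁ and s₂ are admissible then so is s₁ ∩ s₂; consequently there is a (unique) least admissible subset s₀ ⊆ t; (b) for every admissible s, any two witnesses y₁, y₂ (each torsion modulo F(s) with x − yᵢ ∈ F(t)) satisfy y₁ − y₂ ∈ F(s), so the class of the witness modulo F(s) is unique. In particular, below the pair (t, x mod F(t)) there is a unique minimal pair (s₀, y mod F(s₀)). -/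
/-!
Witnesses for two admissible sets `s₁, s₂` differ by an element of `F t` that is torsion modulo
`F (s₁ ∪ s₂)`, hence, by torsion-freeness of `F t / F (s₁ ∪ s₂)`, lies in `F s₁ + F s₂`.
Moving its `F s₁`-part onto the first witness produces an element that is torsion modulo both
`F s₁` and `F s₂`, i.e. modulo `F (s₁ ∩ s₂)`. Intersection-closed families of finite sets have a
least member. Uniqueness of the witness class is torsion-freeness of `F t / F s` once more.
-/

/-- `x` is torsion modulo the subgroup `A`: some positive multiple of `x` lies in `A`. -/
def TorsionModulo {X : Type*} [AddCommGroup X] (A : AddSubgroup X) (x : X) : Prop :=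
  ∃ n : ℕ, 0 < n ∧ n • x ∈ A

/-- A subset `s ⊆ t` is admissible for `x` (relative to the family `F` of subgroups) if
there exists `y`, torsion modulo `F s`, with `x − y ∈ F t`. -/
def AdmissibleFor {ι X : Type*} [AddCommGroup X] (F : Finset ι → AddSubgroup X)
    (t : Finset ι) (x : X) (s : Finset ι) : Prop :=
  s ⊆ t ∧ ∃ y : X, TorsionModulo (F s) y ∧ x - y ∈ F t

theorem InfClosed.exists_isLeast {α : Type*} [SemilatticeInf α] [WellFoundedLT α] {s : Set α}
    (hs : InfClosed s) (hne : s.Nonempty) : ∃ a, IsLeast s a := by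
  obtain ⟨a, ha, hmin⟩ := exists_minimal_of_wellFoundedLT (· ∈ s) hne
  exact ⟨a, ha, fun b hb => (hmin (hs ha hb) inf_le_left).trans inf_le_right⟩

namespace TorsionModulo

variable {X : Type*} [AddCommGroup X] {A B : AddSubgroup X} {x y : X}

theorem of_mem (h : x ∈ A) : TorsionModulo A x :=
  ⟨1, one_pos, by rwa [one_smul]⟩

theorem mono (hAB : A ≤ B) (hx : TorsionModulo A x) : TorsionModulo B x :=
  let ⟨n, hn, h⟩ := hx
  ⟨n, hn, hAB h⟩

theorem sub (hx : TorsionModulo A x) (hy : TorsionModulo A y) : TorsionModulo A (x - y) := by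
  obtain ⟨m, hm, hmx⟩ := hx
  obtain ⟨n, hn, hny⟩ := hy
  refine ⟨m * n, Nat.mul_pos hm hn, ?_⟩
  rw [smul_sub, mul_comm, mul_smul, mul_comm, mul_smul]
  exact sub_mem (A.nsmul_mem hmx n) (A.nsmul_mem hny m)

theorem inf (hA : TorsionModulo A x) (hB : TorsionModulo B x) : TorsionModulo (A ⊓ B) x := by
  obtain ⟨m, hm, hmx⟩ := hA
  obtain ⟨n, hn, hnx⟩ := hB
  refine ⟨m * n, Nat.mul_pos hm hn, ?_, ?_⟩
  · rw [mul_comm, mul_smul]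
    exact A.nsmul_mem hmx n
  · rw [mul_smul]
    exact B.nsmul_mem hnx m

end TorsionModulo

theorem exists_torsionModulo_inf_of_sub_mem_sup {X : Type*} [AddCommGroup X]
    {A B : AddSubgroup X} {y₁ y₂ : X} (h₁ : TorsionModulo A y₁) (h₂ : TorsionModulo B y₂)
    (h : y₁ - y₂ ∈ A ⊔ B) : ∃ y, y₁ - y ∈ A ∧ TorsionModulo (A ⊓ B) y := by
  obtain ⟨a, ha, b, hb, hab⟩ := AddSubgroup.mem_sup.mp h
  have hy : y₁ - a = y₂ - -b := by rw [sub_neg_eq_add, eq_sub_of_add_eq' hab]; abel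
  refine ⟨y₁ - a, by rwa [sub_sub_cancel], ?_⟩
  exact (h₁.sub (.of_mem ha)).inf (hy ▸ h₂.sub (.of_mem (neg_mem hb)))

section AdmissibleFor

variable {ι X : Type*} [AddCommGroup X] {F : Finset ι → AddSubgroup X} {s s₁ s₂ t : Finset ι}
  {x y₁ y₂ : X}

theorem monotone_of_map_union [DecidableEq ι] (hsup : ∀ s t : Finset ι, F (s ∪ t) = F s ⊔ F t) :
    Monotone F := fun s u hsu =>
  le_sup_left.trans_eq ((hsup s u).symm.trans (congrArg F (Finset.union_eq_right.2 hsu)))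

theorem sub_mem_of_torsionModulo
    (htf : ∀ s t : Finset ι, s ⊆ t → ∀ x ∈ F t, TorsionModulo (F s) x → x ∈ F s)
    (hst : s ⊆ t) (h₁ : TorsionModulo (F s) y₁) (hx₁ : x - y₁ ∈ F t)
    (h₂ : TorsionModulo (F s) y₂) (hx₂ : x - y₂ ∈ F t) : y₁ - y₂ ∈ F s :=
  htf s t hst _ (sub_sub_sub_cancel_left y₂ y₁ x ▸ sub_mem hx₂ hx₁) (h₁.sub h₂)

theorem admissibleFor_self (hx : TorsionModulo (F t) x) : AdmissibleFor F t x t :=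
  ⟨subset_rfl, x, hx, by rw [sub_self]; exact zero_mem _⟩

theorem AdmissibleFor.inter [DecidableEq ι]
    (hsup : ∀ s t : Finset ι, F (s ∪ t) = F s ⊔ F t)
    (hinf : ∀ s t : Finset ι, F (s ∩ t) = F s ⊓ F t)
    (htf : ∀ s t : Finset ι, s ⊆ t → ∀ x ∈ F t, TorsionModulo (F s) x → x ∈ F s)
    (h₁ : AdmissibleFor F t x s₁) (h₂ : AdmissibleFor F t x s₂) :
    AdmissibleFor F t x (s₁ ∩ s₂) := by
  obtain ⟨hs₁, y₁, hy₁, hx₁⟩ := h₁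
  obtain ⟨hs₂, y₂, hy₂, hx₂⟩ := h₂
  have hmono := monotone_of_map_union hsup
  have hsub : y₁ - y₂ ∈ F s₁ ⊔ F s₂ := hsup s₁ s₂ ▸
    sub_mem_of_torsionModulo htf (Finset.union_subset hs₁ hs₂)
      (hy₁.mono (hmono Finset.subset_union_left)) hx₁
      (hy₂.mono (hmono Finset.subset_union_right)) hx₂
  obtain ⟨y, hy₁y, hy⟩ := exists_torsionModulo_inf_of_sub_mem_sup hy₁ hy₂ hsub
  refine ⟨Finset.inter_subset_left.trans hs₁, y, hinf s₁ s₂ ▸ hy, ?_⟩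
  simpa only [sub_add_sub_cancel] using add_mem hx₁ (hmono hs₁ hy₁y)

end AdmissibleFor

/-- Let `ι` be a type, `X` an abelian group, and `F` a function assigning
to each finite subset `s ⊆ ι` a subgroup `F s` of `X`, such that `F (s ∪ t) = F s ⊔ F t`,
`F (s ∩ t) = F s ⊓ F t`, and for `s ⊆ t` the quotient `F t / F s` is torsion-free.
Fix a finite subset `t ⊆ ι` and `x ∈ X` torsion modulo `F t`.  Then:
(a) `t` itself is admissible for `x`, and admissible subsets are closed under intersection;
consequently there is a (unique) least admissible subset `s₀ ⊆ t`;
(b) for every admissible `s`, any two witnesses `y₁, y₂` satisfy `y₁ − y₂ ∈ F s`,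
so the class of the witness modulo `F s` is unique. -/
theorem stmt_8 {ι : Type*} [DecidableEq ι] {X : Type*} [AddCommGroup X]
    (F : Finset ι → AddSubgroup X)
    (hsup : ∀ s t : Finset ι, F (s ∪ t) = F s ⊔ F t)
    (hinf : ∀ s t : Finset ι, F (s ∩ t) = F s ⊓ F t)
    (htf : ∀ s t : Finset ι, s ⊆ t → ∀ x ∈ F t, TorsionModulo (F s) x → x ∈ F s)
    (t : Finset ι) (x : X) (hx : TorsionModulo (F t) x) :
    AdmissibleFor F t x t ∧
      (∀ s₁ s₂ : Finset ι, AdmissibleFor F t x s₁ → AdmissibleFor F t x s₂ →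
        AdmissibleFor F t x (s₁ ∩ s₂)) ∧
      (∃ s₀ : Finset ι, AdmissibleFor F t x s₀ ∧
        ∀ s : Finset ι, AdmissibleFor F t x s → s₀ ⊆ s) ∧
      (∀ s : Finset ι, AdmissibleFor F t x s → ∀ y₁ y₂ : X,
        TorsionModulo (F s) y₁ → x - y₁ ∈ F t →
        TorsionModulo (F s) y₂ → x - y₂ ∈ F t → y₁ - y₂ ∈ F s) := by
  have hclosed : InfClosed {s | AdmissibleFor F t x s} :=
    fun _ h₁ _ h₂ => h₁.inter hsup hinf htf h₂
  obtain ⟨s₀, hs₀, hleast⟩ := hclosed.exists_isLeast ⟨t, admissibleFor_self hx⟩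
  exact ⟨admissibleFor_self hx, fun _ _ h₁ h₂ => hclosed h₁ h₂, ⟨s₀, hs₀, fun _ hs => hleast hs⟩,
    fun _ hs _ _ => sub_mem_of_torsionModulo htf hs.1⟩
end

section
/- Let k be a field and W a finite group whose order is invertible in k. Let C be a commutative k-algebra which is local with nilpotent maximal ideal m and residue field k (the composite k → C → C/m is bijective), equipped with an action of W by k-algebra automorphisms. Let L be a C-module endowed with an additive W-action that is semilinear over the W-action on C, i.e., w·(c·x) = (w·c)·(w·x) for all w ∈ W, c ∈ C, x ∈ L. If W acts trivially on L/mL, i.e., w·x − x ∈ m·L for all w ∈ W and x ∈ L, then L is generated as a C-module by its invariants L^W = {x ∈ L : w·x = x for all w ∈ W}; equivalently, the canonical C-linear map C ⊗_k L^W → L is surjective. In particular, if L^W = 0 then L = 0. -/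
/-!
Averaging over `W` (possible since `|W|` is invertible in `k`) writes every `x` as the invariant
`|W|⁻¹ • ∑ w, w • x` plus `|W|⁻¹ • ∑ w, (x - w • x) ∈ m • L`. So `L = span (L^W) + m • L`, and
iterating gives `L = span (L^W) + mⁱ • L` for all `i`, which is `span (L^W)` once `mⁱ = 0`.
-/

namespace Submodule

variable {R M : Type*} [CommSemiring R] [AddCommMonoid M] [Module R M]
  {I : Ideal R} {N : Submodule R M}

theorem top_le_sup_pow_smul_top (h : ⊤ ≤ N ⊔ I • ⊤) (i : ℕ) : ⊤ ≤ N ⊔ (I ^ i) • ⊤ := by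
  induction i with
  | zero => simp [Ideal.one_eq_top]
  | succ i ih =>
    refine ih.trans (sup_le le_sup_left ?_)
    calc (I ^ i) • ⊤
        ≤ (I ^ i) • (N ⊔ I • ⊤) := smul_mono le_rfl h
      _ = (I ^ i) • N ⊔ (I ^ i) • I • ⊤ := smul_sup _ _ _
      _ ≤ N ⊔ (I ^ (i + 1)) • ⊤ := by
        rw [pow_succ, ← Ideal.smul_eq_mul, smul_assoc]
        exact sup_le_sup_right smul_le_right _

theorem eq_top_of_top_le_sup_smul_top_of_isNilpotent (hI : IsNilpotent I)
    (h : ⊤ ≤ N ⊔ I • ⊤) : N = ⊤ := by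
  obtain ⟨n, hn⟩ := hI
  simpa [hn] using top_le_sup_pow_smul_top h n

end Submodule

theorem Finset.smul_sum_univ_smul {W M : Type*} [Group W] [Fintype W] [AddCommMonoid M]
    [DistribMulAction W M] (w : W) (x : M) : w • ∑ v : W, v • x = ∑ v : W, v • x := by
  rw [Finset.smul_sum]
  exact Fintype.sum_equiv (Equiv.mulLeft w) _ _ fun v => (mul_smul w v x).symm

theorem top_le_span_fixedPoints_sup_smul_top
    {k W C L : Type*} [Field k] [Group W] [Fintype W] [CommRing C] [Algebra k C]
    [MulSemiringAction W C] [SMulCommClass W k C] [AddCommGroup L] [Module C L]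
    [DistribMulAction W L] (hW : (Fintype.card W : k) ≠ 0)
    (hsemi : ∀ (w : W) (c : C) (x : L), w • (c • x) = (w • c) • (w • x))
    {I : Ideal C} (htriv : ∀ (w : W) (x : L), w • x - x ∈ I • (⊤ : Submodule C L)) :
    ⊤ ≤ Submodule.span C {x : L | ∀ w : W, w • x = x} ⊔ I • ⊤ := by
  intro x _
  set a : C := algebraMap k C (Fintype.card W : k)⁻¹
  have ha_card : a • (Fintype.card W : C) • x = x := by
    rw [smul_smul, ← map_natCast (algebraMap k C), ← map_mul, inv_mul_cancel₀ hW, map_one,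
      one_smul]
  have hdecomp : x = a • ∑ w : W, w • x + a • ∑ w : W, (x - w • x) := by
    rw [← smul_add, Finset.sum_sub_distrib, add_sub_cancel, Finset.sum_const,
      Finset.card_univ, ← Nat.cast_smul_eq_nsmul C, ha_card]
  rw [hdecomp]
  refine Submodule.add_mem_sup (Submodule.subset_span fun w => ?_)
    (Submodule.smul_mem _ _ (Submodule.sum_mem _ fun w _ => ?_))
  · rw [hsemi, smul_algebraMap, Finset.smul_sum_univ_smul]
  · rw [← neg_sub]
    exact Submodule.neg_mem _ (htriv w x)

theorem stmt_10_general
    (k : Type*) [Field k]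
    (W : Type*) [Group W] [Finite W]
    (hW : (Nat.card W : k) ≠ 0)
    (C : Type*) [CommRing C] [Algebra k C]
    [MulSemiringAction W C] [SMulCommClass W k C]
    (m : Ideal C) (hnil : IsNilpotent m)
    (L : Type*) [AddCommGroup L] [Module C L]
    [DistribMulAction W L]
    (hsemi : ∀ (w : W) (c : C) (x : L), w • (c • x) = (w • c) • (w • x))
    (htriv : ∀ (w : W) (x : L), w • x - x ∈ m • (⊤ : Submodule C L)) :
    Submodule.span C {x : L | ∀ w : W, w • x = x} = ⊤ ∧
      ((∀ x : L, (∀ w : W, w • x = x) → x = 0) → ∀ x : L, x = 0) := by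
  cases nonempty_fintype W
  rw [Nat.card_eq_fintype_card] at hW
  have hspan := Submodule.eq_top_of_top_le_sup_smul_top_of_isNilpotent hnil
    (top_le_span_fixedPoints_sup_smul_top hW hsemi htriv)
  refine ⟨hspan, fun hzero x => ?_⟩
  have hbot : Submodule.span C {x : L | ∀ w : W, w • x = x} = ⊥ :=
    Submodule.span_eq_bot.mpr hzero
  simpa [hbot] using hspan.ge (Submodule.mem_top (x := x))

/-- Let `k` be a field and `W` a finite group whose order is invertible
in `k`.  Let `C` be a commutative `k`-algebra which is local with nilpotent maximal ideal
`m` and residue field `k` (the composite `k → C → C/m` is bijective), with an action of `W`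
by `k`-algebra automorphisms.  Let `L` be a `C`-module with an additive `W`-action that is
semilinear over the `W`-action on `C`.  If `W` acts trivially on `L/mL`, then `L` is
generated as a `C`-module by its invariants `L^W`; in particular, if `L^W = 0` then
`L = 0`. -/
theorem stmt_10
    (k : Type*) [Field k]
    (W : Type*) [Group W] [Finite W]
    (hW : (Nat.card W : k) ≠ 0)
    (C : Type*) [CommRing C] [Algebra k C]
    [MulSemiringAction W C] [SMulCommClass W k C]
    (m : Ideal C) (hm : m.IsMaximal) (hnil : IsNilpotent m)
    (hres : Function.Bijective ((Ideal.Quotient.mk m).comp (algebraMap k C)))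
    (L : Type*) [AddCommGroup L] [Module C L]
    [DistribMulAction W L]
    (hsemi : ∀ (w : W) (c : C) (x : L), w • (c • x) = (w • c) • (w • x))
    (htriv : ∀ (w : W) (x : L), w • x - x ∈ m • (⊤ : Submodule C L)) :
    Submodule.span C {x : L | ∀ w : W, w • x = x} = ⊤ ∧
      ((∀ x : L, (∀ w : W, w • x = x) → x = 0) → ∀ x : L, x = 0) :=
  stmt_10_general k W hW C m hnil L hsemi htriv
end
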